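/- Let S : ℝ³ → ℝ³ be continuous with compact support and assume its Fourier transform F[S](ξ) = ∫_{ℝ³} S(y) e^{-i ξ·y} dy is integrable on ℝ³. Define the indicator I_f(z) := (2π)^{-3} ∫_{S²} ∫_0^∞ [u_p^∞(x̂,ω) + u_s^∞(x̂, √(μ/(λ+2μ)) ω)] e^{i k_p x̂·z} (ω²/(λ+2μ)^{3/2}) dω dσ(x̂) for z ∈ ℝ³, where k_p = ω/√(λ+2μ). Then I_f(z) = S(z) for every z ∈ ℝ³. -/

import Mathlib

/-!
STATEMENT 2 (Theorem 2.1 of the paper, n = 3): the indicator `I_f` built from the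
full (compressional + shear) far field patterns equals the elastic source `S`.
-/

open MeasureTheory Real

noncomputable section

namespace ElasticFull3D

abbrev E3 := EuclideanSpace ℝ (Fin 3)

/-- Cross product in ℝ³. -/
def crossR (u v : Fin 3 → ℝ) : Fin 3 → ℝ :=
  ![u 1 * v 2 - u 2 * v 1, u 2 * v 0 - u 0 * v 2, u 0 * v 1 - u 1 * v 0]

/-- Componentwise Fourier transform of a vector field. -/
def FT3 (U : E3 → Fin 3 → ℂ) (ξ : E3) : Fin 3 → ℂ :=
  fun j => ∫ x : E3, U x j * Complex.exp (-Complex.I * ((∑ i, x i * ξ i : ℝ) : ℂ))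

/-- Compressional wavenumber `k_p = ω / √(λ + 2μ)`. -/
def kp (lam mu ω : ℝ) : ℝ := ω / Real.sqrt (lam + 2 * mu)

/-- Shear wavenumber `k_s = ω / √μ`. -/
def ks (mu ω : ℝ) : ℝ := ω / Real.sqrt mu

/-- Compressional far field pattern
`u_p^∞(x̂,ω) := x̂ ∫ e^{-i k_p x̂·y} (S(y)·x̂) dy`. -/
def up (lam mu : ℝ) (S : E3 → Fin 3 → ℝ) (xhat : E3) (ω : ℝ) : Fin 3 → ℂ :=
  fun j => ((xhat j : ℝ) : ℂ) *
    ∫ y : E3, Complex.exp (-Complex.I * ((kp lam mu ω : ℝ) : ℂ) *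
        ((∑ i, xhat i * y i : ℝ) : ℂ)) * ((∑ i, S y i * xhat i : ℝ) : ℂ)

/-- Shear far field pattern
`u_s^∞(x̂,ω) := ∫ e^{-i k_s x̂·y} x̂ × (S(y) × x̂) dy`. -/
def us (mu : ℝ) (S : E3 → Fin 3 → ℝ) (xhat : E3) (ω : ℝ) : Fin 3 → ℂ :=
  fun j => ∫ y : E3, Complex.exp (-Complex.I * ((ks mu ω : ℝ) : ℂ) *
      ((∑ i, xhat i * y i : ℝ) : ℂ)) *
    ((crossR (fun i => xhat i) (crossR (fun i => S y i) (fun i => xhat i)) j : ℝ) : ℂ)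

/-- The indicator
`I_f(z) := (2π)^{-3} ∫_{S²} ∫_0^∞ [u_p^∞(x̂,ω) + u_s^∞(x̂, √(μ/(λ+2μ)) ω)]
            e^{i k_p x̂·z} (ω²/(λ+2μ)^{3/2}) dω dσ(x̂)`. -/
def If (lam mu : ℝ) (S : E3 → Fin 3 → ℝ) (z : E3) : Fin 3 → ℂ :=
  (((2 * π) ^ 3 : ℝ) : ℂ)⁻¹ •
    ∫ xhat : Metric.sphere (0 : E3) 1,
      (∫ ω in Set.Ioi (0 : ℝ), fun j =>
        (up lam mu S (xhat : E3) ω j +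
            us mu S (xhat : E3) (Real.sqrt (mu / (lam + 2 * mu)) * ω) j) *
          Complex.exp (Complex.I * ((kp lam mu ω : ℝ) : ℂ) *
            ((∑ i, (xhat : E3) i * z i : ℝ) : ℂ)) *
          ((ω ^ 2 / (lam + 2 * mu) ^ ((3 : ℝ) / 2) : ℝ) : ℂ))
      ∂((volume : Measure E3).toSphere)

/-! ### Auxiliary lemmas -/

section Aux

open Set Metric
open scoped FourierTransform RealInnerProductSpace

lemma finrank_E3 : Module.finrank ℝ E3 = 3 := finrank_euclideanSpace_fin

variable {F : Type*} [NormedAddCommGroup F] [NormedSpace ℝ F] [CompleteSpace F]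

omit [CompleteSpace F] in
lemma integral_spherical (g : E3 → F) (hg : Integrable g) :
    ∫ x, g x = ∫ xhat : sphere (0 : E3) 1,
      (∫ r in Set.Ioi (0 : ℝ), r ^ 2 • g (r • (xhat : E3)))
      ∂((volume : Measure E3).toSphere) := by
  have hs : MeasurableSet ({0}ᶜ : Set E3) := (measurableSet_singleton 0).compl
  set μ : Measure E3 := volume
  have h1 : ∫ x, g x ∂μ = ∫ x : ({0}ᶜ : Set E3), g x.1 ∂(μ.comap Subtype.val) := by
    rw [integral_subtype_comap hs, restrict_compl_singleton]
  have hdim : Module.finrank ℝ E3 - 1 = 2 := by rw [finrank_E3]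
  set G : sphere (0 : E3) 1 × Set.Ioi (0 : ℝ) → F := fun p => g ((p.2 : ℝ) • (p.1 : E3)) with hG
  have h2 : ∫ x : ({0}ᶜ : Set E3), g x.1 ∂(μ.comap Subtype.val)
      = ∫ p, G p ∂(μ.toSphere.prod (.volumeIoiPow (Module.finrank ℝ E3 - 1))) := by
    rw [← μ.measurePreserving_homeomorphUnitSphereProd.integral_comp
      (Homeomorph.measurableEmbedding _) G]
    refine integral_congr_ae (Filter.Eventually.of_forall fun x => ?_)
    have hx : (x : E3) ≠ 0 := x.2
    simp only [hG, homeomorphUnitSphereProd_apply_fst_coe, homeomorphUnitSphereProd_apply_snd_coe]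
    rw [smul_inv_smul₀ (norm_ne_zero_iff.2 hx)]
  have hGint : Integrable G (μ.toSphere.prod (.volumeIoiPow (Module.finrank ℝ E3 - 1))) := by
    rw [← (μ.measurePreserving_homeomorphUnitSphereProd.integrable_comp_emb
      (Homeomorph.measurableEmbedding _))]
    have : (G ∘ (homeomorphUnitSphereProd E3)) = fun x : ({0}ᶜ : Set E3) => g x.1 := by
      ext x
      have hx : (x : E3) ≠ 0 := x.2
      simp only [Function.comp_apply, hG, homeomorphUnitSphereProd_apply_fst_coe,
        homeomorphUnitSphereProd_apply_snd_coe]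
      rw [smul_inv_smul₀ (norm_ne_zero_iff.2 hx)]
    rw [this]
    have := hg.restrict (s := {0}ᶜ)
    rw [← map_comap_subtype_coe hs] at this
    exact ((MeasurableEmbedding.subtype_coe hs).integrable_map_iff).1 this
  have h3 : ∫ p, G p ∂(μ.toSphere.prod (.volumeIoiPow (Module.finrank ℝ E3 - 1)))
      = ∫ xhat : sphere (0 : E3) 1,
          (∫ r : Set.Ioi (0:ℝ), g ((r:ℝ) • (xhat : E3)) ∂(.volumeIoiPow (Module.finrank ℝ E3 - 1)))
        ∂μ.toSphere := integral_prod G hGint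
  have h4 : ∀ xhat : sphere (0 : E3) 1,
      (∫ r : Set.Ioi (0:ℝ), g ((r:ℝ) • (xhat : E3)) ∂(.volumeIoiPow (Module.finrank ℝ E3 - 1)))
      = ∫ r in Set.Ioi (0 : ℝ), r ^ 2 • g (r • (xhat : E3)) := by
    intro xhat
    rw [hdim]
    simp only [Measure.volumeIoiPow, ENNReal.ofReal]
    rw [integral_withDensity_eq_integral_smul
      ((measurable_subtype_coe.pow_const _).real_toNNReal),
      integral_subtype_comap measurableSet_Ioi
        (fun a : ℝ => Real.toNNReal (a ^ 2) • g (a • (xhat : E3)))]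
    refine setIntegral_congr_fun measurableSet_Ioi fun x hx => ?_
    rw [NNReal.smul_def, Real.coe_toNNReal _ (pow_nonneg (le_of_lt hx) _)]
  rw [h1, h2, h3]
  exact integral_congr_ae (Filter.Eventually.of_forall fun xhat => h4 xhat)

lemma cross_identity (a b : Fin 3 → ℝ) (h : (∑ i, a i ^ 2) = 1) (j : Fin 3) :
    a j * (∑ i, b i * a i) + crossR a (crossR b a) j = b j := by
  rw [Fin.sum_univ_three] at h ⊢
  fin_cases j <;> simp [crossR] <;>
    [linear_combination b 0 * h; linear_combination b 1 * h; linear_combination b 2 * h]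

lemma sum_sq_eq_one (xhat : E3) (hx : ‖xhat‖ = 1) : (∑ i, xhat i ^ 2) = 1 := by
  have h := EuclideanSpace.norm_eq xhat
  simp only [Real.norm_eq_abs, sq_abs] at h
  rw [hx] at h
  nlinarith [Real.sq_sqrt (Finset.sum_nonneg fun i (_ : i ∈ Finset.univ) => sq_nonneg (xhat i)),
    Real.sqrt_nonneg (∑ i, xhat i ^ 2)]

lemma inner_eq_sum (x y : E3) : ⟪x, y⟫ = ∑ i, x i * y i := by
  simp [PiLp.inner_apply, RCLike.inner_apply, mul_comm]

lemma FT3_eq_fourierIntegral (U : E3 → Fin 3 → ℂ) (ξ : E3) (j : Fin 3) :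
    FT3 U ξ j = 𝓕 (fun x => U x j) (((2 * π)⁻¹ : ℝ) • ξ) := by
  rw [Real.fourier_eq']
  refine integral_congr_ae (Filter.Eventually.of_forall fun x => ?_)
  simp only [smul_eq_mul, inner_eq_sum, PiLp.smul_apply]
  have h2π : (2 * π) ≠ 0 := by positivity
  have hsum : (∑ i, x i * ((2 * π)⁻¹ * ξ i)) = (2 * π)⁻¹ * ∑ i, x i * ξ i := by
    rw [Finset.mul_sum]
    exact Finset.sum_congr rfl fun i _ => by ring
  rw [hsum, mul_comm]
  congr 1
  have hre : -2 * π * ((2 * π)⁻¹ * (∑ i, x i * ξ i)) = -(∑ i, x i * ξ i) := by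
    field_simp
  rw [hre]
  push_cast
  ring

lemma continuous_sum_mul (w : E3) : Continuous fun y : E3 => ∑ i, w i * y i := by
  have : (fun y : E3 => ∑ i, w i * y i) = fun y : E3 => ⟪w, y⟫ := by
    funext y; rw [inner_eq_sum]
  rw [this]
  exact Continuous.inner continuous_const continuous_id

lemma continuous_cross (w : Fin 3 → ℝ) (j : Fin 3) {S : E3 → Fin 3 → ℝ} (hS : Continuous S) :
    Continuous fun y : E3 => crossR w (crossR (fun i => S y i) w) j := by
  have h : ∀ i, Continuous fun y : E3 => S y i := fun i => (continuous_apply i).comp hS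
  fin_cases j <;> simp [crossR] <;> fun_prop

lemma crossR_zero (w : Fin 3 → ℝ) (j : Fin 3) :
    crossR w (crossR (fun _ => (0:ℝ)) w) j = 0 := by
  fin_cases j <;> simp [crossR]

end Aux

open scoped FourierTransform RealInnerProductSpace

theorem indicator_full_eq_source (lam mu : ℝ) (hmu : 0 < mu) (hlm : 0 < 2 * mu + lam)
    (S : E3 → Fin 3 → ℝ) (hS_cont : Continuous S) (hS_supp : HasCompactSupport S)
    (hFT : Integrable (FT3 (fun y j => ((S y j : ℝ) : ℂ))))
    (z : E3) :
    If lam mu S z = fun j => ((S z j : ℝ) : ℂ) := by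
  have h2π : (0:ℝ) < 2 * π := by positivity
  have h2πne : (2*π : ℝ) ≠ 0 := ne_of_gt h2π
  have htpos : (0:ℝ) < lam + 2 * mu := by linarith
  have hsqt : (0:ℝ) < Real.sqrt (lam + 2 * mu) := Real.sqrt_pos.2 htpos
  set S' : E3 → Fin 3 → ℂ := fun y j => ((S y j : ℝ) : ℂ) with hS'def
  -- basic integrability
  have hfj_cont : ∀ j, Continuous (fun y : E3 => S' y j) :=
    fun j => Complex.continuous_ofReal.comp ((continuous_apply j).comp hS_cont)
  have hfj_supp : ∀ j, HasCompactSupport (fun y : E3 => S' y j) := fun j =>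
    hS_supp.comp_left (g := fun v : Fin 3 → ℝ => ((v j : ℝ) : ℂ)) (by simp)
  have hfj_int : ∀ j, Integrable (fun y : E3 => S' y j) :=
    fun j => (hfj_cont j).integrable_of_hasCompactSupport (hfj_supp j)
  have hFTj : ∀ j, Integrable (fun ξ : E3 => FT3 S' ξ j) := fun j =>
    (ContinuousLinearMap.proj (R := ℂ) (φ := fun _ : Fin 3 => ℂ) j).integrable_comp hFT
  have hFcomp : ∀ (j : Fin 3) (w : E3), 𝓕 (fun y => S' y j) w = FT3 S' ((2*π) • w) j := by
    intro j w
    rw [FT3_eq_fourierIntegral, smul_smul, inv_mul_cancel₀ h2πne, one_smul]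
  have hFfj_int : ∀ j, Integrable (𝓕 (fun y => S' y j)) := by
    intro j
    have h1 : (𝓕 fun y => S' y j) = fun w : E3 => FT3 S' ((2*π) • w) j :=
      funext fun w => hFcomp j w
    rw [h1]
    exact (hFTj j).comp_smul h2πne
  have hinv : ∀ j, 𝓕⁻ (𝓕 (fun y => S' y j)) z = S' z j := fun j =>
    (hfj_int j).fourierInv_fourier_eq (hFfj_int j) ((hfj_cont j).continuousAt)
  -- the function g
  set g : E3 → Fin 3 → ℂ :=
    fun ξ => Complex.exp (Complex.I * ((⟪ξ, z⟫ : ℝ) : ℂ)) • FT3 S' ξ with hgdef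
  have hg_int : Integrable g := by
    refine hFT.norm.mono' (AEStronglyMeasurable.smul (f := fun ξ : E3 => Complex.exp (Complex.I * ((⟪ξ, z⟫ : ℝ) : ℂ))) ?_ hFT.1)
      (Filter.Eventually.of_forall fun ξ => ?_)
    · exact (Complex.continuous_exp.comp (continuous_const.mul
        (Complex.continuous_ofReal.comp (continuous_id.inner continuous_const)))).aestronglyMeasurable
    · rw [norm_smul]
      simp [Complex.norm_exp]
  -- component value of ∫ g
  have hgj : ∀ j, (∫ ξ, g ξ) j = (((2*π)^3 : ℝ) : ℂ) * S' z j := by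
    intro j
    have h1 : (∫ ξ, g ξ) j = ∫ ξ, g ξ j :=
      ((ContinuousLinearMap.proj (R := ℂ) (φ := fun _ : Fin 3 => ℂ) j).integral_comp_comm
        hg_int).symm
    have key : (∫ x : E3, (fun ξ => g ξ j) ((2*π : ℝ) • x)) = 𝓕⁻ (𝓕 (fun y => S' y j)) z := by
      rw [Real.fourierInv_eq']
      refine integral_congr_ae (Filter.Eventually.of_forall fun x => ?_)
      simp only [hgdef, Pi.smul_apply, smul_eq_mul]
      rw [hFcomp j x, real_inner_smul_left]
      push_cast
      ring
    have hscale := MeasureTheory.Measure.integral_comp_smul_of_nonneg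
      (volume : Measure E3) (fun ξ => g ξ j) (2*π : ℝ) (hR := le_of_lt h2π)
    rw [finrank_E3, key, hinv j] at hscale
    rw [h1, hscale, Complex.real_smul, ← mul_assoc]
    have hone : (((2 * π) ^ 3 : ℝ) : ℂ) * ((((2 * π) ^ 3)⁻¹ : ℝ) : ℂ) = 1 := by
      push_cast
      rw [mul_inv_cancel₀ (pow_ne_zero 3 (mul_ne_zero two_ne_zero (Complex.ofReal_ne_zero.2 pi_ne_zero)))]
    rw [hone, one_mul]
  -- main computation on each sphere point
  have hmain : ∀ xhat : Metric.sphere (0:E3) 1,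
      (∫ ω in Set.Ioi (0 : ℝ), fun j =>
        (up lam mu S (xhat : E3) ω j +
            us mu S (xhat : E3) (Real.sqrt (mu / (lam + 2 * mu)) * ω) j) *
          Complex.exp (Complex.I * ((kp lam mu ω : ℝ) : ℂ) *
            ((∑ i, (xhat : E3) i * z i : ℝ) : ℂ)) *
          ((ω ^ 2 / (lam + 2 * mu) ^ ((3 : ℝ) / 2) : ℝ) : ℂ))
      = ∫ r in Set.Ioi (0:ℝ), r^2 • g (r • (xhat : E3)) := by
    intro xhat
    have hx1 : ‖(xhat : E3)‖ = 1 := mem_sphere_zero_iff_norm.1 xhat.2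
    have hsum1 := sum_sq_eq_one _ hx1
    -- Step A : pointwise in ω identity
    have hA : ∀ ω : ℝ, (fun j =>
        (up lam mu S (xhat : E3) ω j +
            us mu S (xhat : E3) (Real.sqrt (mu / (lam + 2 * mu)) * ω) j) *
          Complex.exp (Complex.I * ((kp lam mu ω : ℝ) : ℂ) *
            ((∑ i, (xhat : E3) i * z i : ℝ) : ℂ)) *
          ((ω ^ 2 / (lam + 2 * mu) ^ ((3 : ℝ) / 2) : ℝ) : ℂ))
        = ((ω ^ 2 / (lam + 2 * mu) ^ ((3 : ℝ) / 2) : ℝ)) • g ((kp lam mu ω) • (xhat : E3)) := by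
      intro ω
      funext j
      -- (i) up + us = FT3 at kp • xhat
      have hksp : ks mu (Real.sqrt (mu / (lam + 2 * mu)) * ω) = kp lam mu ω := by
        rw [ks, kp, Real.sqrt_div hmu.le]
        field_simp
      have hups : up lam mu S (xhat : E3) ω j +
          us mu S (xhat : E3) (Real.sqrt (mu / (lam + 2 * mu)) * ω) j
          = FT3 S' ((kp lam mu ω) • (xhat : E3)) j := by
        simp only [up, us, FT3, hksp]
        have hint1 : Integrable (fun y : E3 =>
            Complex.exp (-Complex.I * ((kp lam mu ω : ℝ) : ℂ) *
              ((∑ i, (xhat : E3) i * y i : ℝ) : ℂ)) * ((∑ i, S y i * (xhat : E3) i : ℝ) : ℂ)) := by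
          apply Continuous.integrable_of_hasCompactSupport
          · exact (Complex.continuous_exp.comp (continuous_const.mul
              (Complex.continuous_ofReal.comp (continuous_sum_mul _)))).mul
              (Complex.continuous_ofReal.comp (continuous_finset_sum _ fun i _ =>
                ((continuous_apply i).comp hS_cont).mul continuous_const))
          · apply HasCompactSupport.mul_left
            exact hS_supp.comp_left
              (g := fun v : Fin 3 → ℝ => ((∑ i, v i * (xhat : E3) i : ℝ) : ℂ)) (by simp)
        have hint2 : Integrable (fun y : E3 =>
            Complex.exp (-Complex.I * ((kp lam mu ω : ℝ) : ℂ) *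
              ((∑ i, (xhat : E3) i * y i : ℝ) : ℂ)) *
            ((crossR (fun i => (xhat : E3) i) (crossR (fun i => S y i) (fun i => (xhat : E3) i)) j
              : ℝ) : ℂ)) := by
          apply Continuous.integrable_of_hasCompactSupport
          · exact (Complex.continuous_exp.comp (continuous_const.mul
              (Complex.continuous_ofReal.comp (continuous_sum_mul _)))).mul
              (Complex.continuous_ofReal.comp (continuous_cross _ j hS_cont))
          · apply HasCompactSupport.mul_left
            refine hS_supp.comp_left
              (g := fun v : Fin 3 → ℝ =>
                ((crossR (fun i => (xhat : E3) i) (crossR (fun i => v i) (fun i => (xhat : E3) i)) j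
                  : ℝ) : ℂ)) ?_
            simp only [Pi.zero_apply]
            rw [show (fun i : Fin 3 => (0:ℝ)) = (fun _ : Fin 3 => (0:ℝ)) from rfl, crossR_zero]
            simp
        rw [← integral_const_mul, ← integral_add (hint1.const_mul _) hint2]
        refine integral_congr_ae (Filter.Eventually.of_forall fun y => ?_)
        dsimp only
        have hexp : Complex.exp (-Complex.I *
              ((∑ i, y i * ((kp lam mu ω • (xhat : E3)) i) : ℝ) : ℂ))
            = Complex.exp (-Complex.I * ((kp lam mu ω : ℝ) : ℂ) *
              ((∑ i, (xhat : E3) i * y i : ℝ) : ℂ)) := by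
          congr 1
          have : (∑ i, y i * ((kp lam mu ω • (xhat : E3)) i))
              = kp lam mu ω * ∑ i, (xhat : E3) i * y i := by
            rw [Finset.mul_sum]
            refine Finset.sum_congr rfl fun i _ => ?_
            simp only [PiLp.smul_apply, smul_eq_mul]
            ring
          rw [this]
          push_cast
          ring
        rw [hexp]
        have hid := cross_identity (fun i => (xhat : E3) i) (fun i => S y i) hsum1 j
        have hidC : (((xhat : E3) j : ℝ) : ℂ) * ((∑ i, S y i * (xhat : E3) i : ℝ) : ℂ) +
            ((crossR (fun i => (xhat : E3) i) (crossR (fun i => S y i) (fun i => (xhat : E3) i)) j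
              : ℝ) : ℂ) = ((S y j : ℝ) : ℂ) := by
          exact_mod_cast hid
        have : S' y j = ((S y j : ℝ) : ℂ) := rfl
        rw [this]
        linear_combination Complex.exp (-Complex.I * ((kp lam mu ω : ℝ) : ℂ) *
          ((∑ i, (xhat : E3) i * y i : ℝ) : ℂ)) * hidC
      rw [hups]
      -- (ii) match with g
      have hiz : (⟪kp lam mu ω • (xhat : E3), z⟫ : ℝ) = kp lam mu ω * ∑ i, (xhat : E3) i * z i := by
        rw [real_inner_smul_left, inner_eq_sum]
      simp only [hgdef, Pi.smul_apply, smul_eq_mul, hiz, Complex.real_smul]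
      push_cast
      ring
    rw [setIntegral_congr_fun measurableSet_Ioi (fun ω _ => hA ω)]
    -- Step B : radial change of variables
    have hb : (0:ℝ) < (Real.sqrt (lam + 2 * mu))⁻¹ := by positivity
    have ht32 : (lam + 2 * mu) ^ ((3:ℝ)/2) = (Real.sqrt (lam + 2 * mu))^3 := by
      rw [Real.sqrt_eq_rpow, ← Real.rpow_natCast ((lam + 2*mu) ^ ((1:ℝ)/2)) 3,
        ← Real.rpow_mul htpos.le]
      norm_num
    have hBpt : ∀ ω : ℝ, ((ω ^ 2 / (lam + 2 * mu) ^ ((3 : ℝ) / 2) : ℝ))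
          • g ((kp lam mu ω) • (xhat : E3))
        = (Real.sqrt (lam + 2 * mu))⁻¹ •
          ((fun r => r^2 • g (r • (xhat : E3))) (ω * (Real.sqrt (lam + 2 * mu))⁻¹)) := by
      intro ω
      have hkp : kp lam mu ω = ω * (Real.sqrt (lam + 2 * mu))⁻¹ := by
        rw [kp, div_eq_mul_inv]
      rw [hkp]
      rw [smul_smul]
      congr 1
      rw [ht32, div_eq_mul_inv, ← inv_pow, mul_pow]
      ring
    rw [setIntegral_congr_fun measurableSet_Ioi (fun ω _ => hBpt ω),
      integral_smul, integral_comp_mul_right_Ioi (fun r => r^2 • g (r • (xhat : E3))) 0 hb,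
      zero_mul, smul_smul, mul_inv_cancel₀ (ne_of_gt hb), one_smul]
  -- assemble
  have houter : (∫ xhat : Metric.sphere (0 : E3) 1,
      (∫ ω in Set.Ioi (0 : ℝ), fun j =>
        (up lam mu S (xhat : E3) ω j +
            us mu S (xhat : E3) (Real.sqrt (mu / (lam + 2 * mu)) * ω) j) *
          Complex.exp (Complex.I * ((kp lam mu ω : ℝ) : ℂ) *
            ((∑ i, (xhat : E3) i * z i : ℝ) : ℂ)) *
          ((ω ^ 2 / (lam + 2 * mu) ^ ((3 : ℝ) / 2) : ℝ) : ℂ))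
      ∂((volume : Measure E3).toSphere)) = ∫ ξ, g ξ := by
    rw [integral_spherical g hg_int]
    exact integral_congr_ae (Filter.Eventually.of_forall fun xhat => hmain xhat)
  have hIf : If lam mu S z = (((2 * π) ^ 3 : ℝ) : ℂ)⁻¹ • ∫ ξ, g ξ := by
    rw [If, houter]
  rw [hIf]
  funext j
  rw [Pi.smul_apply, hgj j, smul_eq_mul, ← mul_assoc,
    inv_mul_cancel₀ (by exact_mod_cast pow_ne_zero 3 h2πne : (((2 * π) ^ 3 : ℝ) : ℂ) ≠ 0), one_mul]

end ElasticFull3D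

end
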